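/- The seven vector fields on ℝ² \ {0}: r∂_r, ∂_θ, r∂_x, r∂_y, −x r∂_r, −y r∂_r, −r²∂_r (in polar/Cartesian coordinates with r = √(x²+y²)) are linearly independent over ℝ and span a 7-dimensional Lie algebra of vector fields (i.e., their ℝ-span is closed under Lie bracket). -/

import Mathlib

/-!
On the punctured plane `r = √(x² + y²)` is smooth with `dr = (x dx + y dy) / r`, so each field
and its differential are rational expressions in `x`, `y`, `r`, and each bracket becomes an
identity between such expressions modulo `r² = x² + y²`, with explicit structure constants.
For linear independence restrict to the axes: along `(t, 0)` the first components of `r∂_r`,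
`r∂_x`, `−x r∂_r`, `−r²∂_r` are `t`, `|t|`, `−t²`, `−|t| t`, which the values `t = ±1, 2` tell
apart, and similarly along `(0, t)`.
-/

open Real

/-- The seven Kepler infinitesimal orbital symmetries, as vector fields on the
punctured plane (in Cartesian components; `r∂_r = (x,y)`, `∂_θ = (−y,x)`,
`r∂_x = (r,0)`, `r∂_y = (0,r)`, `−x r∂_r`, `−y r∂_r`, `−r² ∂_r`). -/
noncomputable def keplerVF : Fin 7 → (ℝ × ℝ → ℝ × ℝ) :=
  fun i p =>
    let r := Real.sqrt (p.1 ^ 2 + p.2 ^ 2)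
    match i with
    | 0 => (p.1, p.2)
    | 1 => (-p.2, p.1)
    | 2 => (r, 0)
    | 3 => (0, r)
    | 4 => (-p.1 ^ 2, -p.1 * p.2)
    | 5 => (-p.1 * p.2, -p.2 ^ 2)
    | 6 => (-(r * p.1), -(r * p.2))

/-- Lie bracket of vector fields on `ℝ²`: `[V,W](p) = DW(p)V(p) − DV(p)W(p)`. -/
noncomputable def lieBracketVF (V W : ℝ × ℝ → ℝ × ℝ) : ℝ × ℝ → ℝ × ℝ :=
  fun p => fderiv ℝ W p (V p) - fderiv ℝ V p (W p)

theorem Prod.fst_sq_add_snd_sq_pos {R : Type*} [CommRing R] [LinearOrder R]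
    [IsStrictOrderedRing R] {p : R × R} (hp : p ≠ 0) : 0 < p.1 ^ 2 + p.2 ^ 2 := by
  rcases eq_or_ne p.1 0 with h1 | h1
  · have h2 : p.2 ≠ 0 := fun h2 => hp (Prod.ext h1 h2)
    positivity
  · positivity

/-- `keplerVF` with the radius `r` as an independent variable. -/
def keplerField (x y r : ℝ) : Fin 7 → ℝ × ℝ
  | 0 => (x, y)
  | 1 => (-y, x)
  | 2 => (r, 0)
  | 3 => (0, r)
  | 4 => (-x ^ 2, -x * y)
  | 5 => (-x * y, -y ^ 2)
  | 6 => (-(r * x), -(r * y))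

theorem keplerVF_apply (i : Fin 7) (p : ℝ × ℝ) :
    keplerVF i p = keplerField p.1 p.2 √(p.1 ^ 2 + p.2 ^ 2) i := by
  fin_cases i <;> rfl

/-- The differential of `keplerField` along `v`, using `dr = (x v₁ + y v₂) / r`. -/
noncomputable def keplerFieldDeriv (x y r : ℝ) (i : Fin 7) (v : ℝ × ℝ) : ℝ × ℝ :=
  let dr := (x * v.1 + y * v.2) / r
  match i with
  | 0 => v
  | 1 => (-v.2, v.1)
  | 2 => (dr, 0)
  | 3 => (0, dr)
  | 4 => (-(2 * x * v.1), -(y * v.1 + x * v.2))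
  | 5 => (-(y * v.1 + x * v.2), -(2 * y * v.2))
  | 6 => (-(dr * x + r * v.1), -(dr * y + r * v.2))

open ContinuousLinearMap in
theorem fderiv_keplerVF_apply {p : ℝ × ℝ} (hp : p ≠ 0) (i : Fin 7) (v : ℝ × ℝ) :
    fderiv ℝ (keplerVF i) p v = keplerFieldDeriv p.1 p.2 √(p.1 ^ 2 + p.2 ^ 2) i v := by
  have hx : HasFDerivAt (fun q : ℝ × ℝ => q.1) (fst ℝ ℝ ℝ) p := hasFDerivAt_fst
  have hy : HasFDerivAt (fun q : ℝ × ℝ => q.2) (snd ℝ ℝ ℝ) p := hasFDerivAt_snd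
  have h0 : HasFDerivAt (fun _ : ℝ × ℝ => (0 : ℝ)) (0 : ℝ × ℝ →L[ℝ] ℝ) p :=
    hasFDerivAt_const 0 p
  have hr := ((hx.pow 2).add (hy.pow 2)).sqrt (Prod.fst_sq_add_snd_sq_pos hp).ne'
  obtain ⟨D, hD, hDv⟩ : ∃ D, HasFDerivAt (keplerVF i) D p ∧
      D v = keplerFieldDeriv p.1 p.2 √(p.1 ^ 2 + p.2 ^ 2) i v := by
    fin_cases i
    · exact ⟨_, hx.prodMk hy, rfl⟩
    · exact ⟨_, hy.neg.prodMk hx, rfl⟩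
    · exact ⟨_, hr.prodMk h0, by simp [keplerFieldDeriv]; ring⟩
    · exact ⟨_, h0.prodMk hr, by simp [keplerFieldDeriv]; ring⟩
    · exact ⟨_, (hx.pow 2).neg.prodMk (hx.neg.mul hy), by simp [keplerFieldDeriv]⟩
    · exact ⟨_, (hx.neg.mul hy).prodMk (hy.pow 2).neg, by simp [keplerFieldDeriv]⟩
    · exact ⟨_, (hr.mul hx).neg.prodMk (hr.mul hy).neg,
        by ext <;> simp [keplerFieldDeriv] <;> ring⟩
  rw [hD.fderiv, hDv]

def keplerStructConst : Fin 7 → Fin 7 → Fin 7 → ℝ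
  | 0, 4 => Pi.single 4 1
  | 4, 0 => Pi.single 4 (-1)
  | 0, 5 => Pi.single 5 1
  | 5, 0 => Pi.single 5 (-1)
  | 0, 6 => Pi.single 6 1
  | 6, 0 => Pi.single 6 (-1)
  | 1, 2 => Pi.single 3 (-1)
  | 2, 1 => Pi.single 3 1
  | 1, 3 => Pi.single 2 1
  | 3, 1 => Pi.single 2 (-1)
  | 1, 4 => Pi.single 5 (-1)
  | 4, 1 => Pi.single 5 1
  | 1, 5 => Pi.single 4 1
  | 5, 1 => Pi.single 4 (-1)
  | 2, 3 => Pi.single 1 1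
  | 3, 2 => Pi.single 1 (-1)
  | 2, 4 => Pi.single 6 1
  | 4, 2 => Pi.single 6 (-1)
  | 2, 6 => Pi.single 4 1
  | 6, 2 => Pi.single 4 (-1)
  | 3, 5 => Pi.single 6 1
  | 5, 3 => Pi.single 6 (-1)
  | 3, 6 => Pi.single 5 1
  | 6, 3 => Pi.single 5 (-1)
  | _, _ => 0

theorem keplerFieldDeriv_bracket_eq_sum {x y r : ℝ} (hr : r ≠ 0) (hr2 : r ^ 2 = x ^ 2 + y ^ 2)
    (i j : Fin 7) :
    keplerFieldDeriv x y r j (keplerField x y r i) - keplerFieldDeriv x y r i (keplerField x y r j)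
      = ∑ k, keplerStructConst i j k • keplerField x y r k := by
  fin_cases i <;> fin_cases j <;>
    simp [keplerFieldDeriv, keplerField, keplerStructConst, Prod.ext_iff] <;>
    field_simp <;> grind

theorem lieBracketVF_keplerVF {p : ℝ × ℝ} (hp : p ≠ 0) (i j : Fin 7) :
    lieBracketVF (keplerVF i) (keplerVF j) p = ∑ k, keplerStructConst i j k • keplerVF k p := by
  have hq := Prod.fst_sq_add_snd_sq_pos hp
  simp only [lieBracketVF, fderiv_keplerVF_apply hp, keplerVF_apply]
  exact keplerFieldDeriv_bracket_eq_sum (sqrt_pos.2 hq).ne' (sq_sqrt hq.le) i j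

theorem eq_zero_of_sum_smul_keplerVF_eq_zero (cf : Fin 7 → ℝ)
    (h : ∀ p : ℝ × ℝ, p ≠ 0 → ∑ i, cf i • keplerVF i p = 0) : cf = 0 := by
  have sqrt_four : √4 = 2 := by
    rw [show (4 : ℝ) = 2 ^ 2 by norm_num, sqrt_sq zero_le_two]
  have e1 := h (1, 0) (by simp)
  have e2 := h (-1, 0) (by simp)
  have e3 := h (0, 1) (by simp)
  have e4 := h (0, -1) (by simp)
  have e5 := h (2, 0) (by simp)
  norm_num [keplerVF_apply, keplerField, Fin.sum_univ_seven, Prod.ext_iff, sqrt_four]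
    at e1 e2 e3 e4 e5
  ext i
  fin_cases i <;> simp <;> linarith

theorem keplerVF_linearIndependent_and_bracket_closed :
    (∀ cf : Fin 7 → ℝ,
        (∀ p : ℝ × ℝ, p ≠ 0 → ∑ i, cf i • keplerVF i p = 0) → cf = 0) ∧
    (∀ i j : Fin 7, ∃ cf : Fin 7 → ℝ, ∀ p : ℝ × ℝ, p ≠ 0 →
        lieBracketVF (keplerVF i) (keplerVF j) p = ∑ k, cf k • keplerVF k p) :=
  ⟨eq_zero_of_sum_smul_keplerVF_eq_zero, fun i j =>
    ⟨keplerStructConst i j, fun _ hp => lieBracketVF_keplerVF hp i j⟩⟩
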